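/- arXiv:2604.23133 — 2 statements merged into one kernel-verified Lean document; each statement's English description precedes it below -/
import Mathlib

section
/- For the sequence p_n (hitting probabilities of a fair die random walk), p_n = 7^{n-1}/6^n for 1 ≤ n ≤ 6; in particular p_n is strictly increasing on {1,...,6}. -/
/-!
For a `d`-sided die and `1 ≤ n ≤ d`, the window of the recurrence still reaches back to `p 0`,
so `d * p n` is the full prefix sum `p 0 + ⋯ + p (n - 1)`. Subtracting consecutive prefix sums
gives `d * p (n + 1) = (d + 1) * p n` for `1 ≤ n < d`; with `p 1 = p 0 / d` this is a geometric
progression of ratio `(d + 1) / d > 1`.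
-/

open Finset

theorem Finset.sum_Icc_one_sub_eq_sum_range {M : Type*} [AddCommMonoid M] (f : ℕ → M) (n : ℕ) :
    ∑ i ∈ Icc 1 n, f (n - i) = ∑ j ∈ range n, f j :=
  sum_nbij' (fun i => n - i) (fun j => n - j)
    (fun i hi => by simp only [mem_Icc, mem_range] at hi ⊢; omega)
    (fun j hj => by simp only [mem_Icc, mem_range] at hj ⊢; omega)
    (fun i hi => by simp only [mem_Icc] at hi; omega)
    (fun j hj => by simp only [mem_range] at hj; omega)
    (fun _ _ => rfl)

namespace DieRecurrence

variable {d : ℕ} {p : ℕ → ℚ}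
  (hrec : ∀ n : ℕ, 1 ≤ n → p n = (1 / d) * ∑ i ∈ Icc 1 (min n d), p (n - i))
include hrec

theorem eq_div_mul_sum_range {n : ℕ} (hn : 1 ≤ n) (hnd : n ≤ d) :
    p n = (1 / d) * ∑ j ∈ range n, p j := by
  rw [hrec n hn, min_eq_left hnd, sum_Icc_one_sub_eq_sum_range]

theorem succ_eq_mul {n : ℕ} (hn : 1 ≤ n) (hnd : n < d) :
    p (n + 1) = (d + 1) / d * p n := by
  have hd : (d : ℚ) ≠ 0 := Nat.cast_ne_zero.mpr (by omega)
  have hsum : ∑ j ∈ range n, p j = d * p n := by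
    rw [eq_div_mul_sum_range hrec hn hnd.le]
    field_simp
  rw [eq_div_mul_sum_range hrec (by omega) hnd, sum_range_succ, hsum]
  field_simp

theorem eq_pow_div_pow {n : ℕ} (hn : 1 ≤ n) (hnd : n ≤ d) :
    p n = (d + 1) ^ (n - 1) / d ^ n * p 0 := by
  induction n, hn using Nat.le_induction with
  | base =>
    rw [hrec 1 le_rfl, min_eq_left (by omega)]
    simp
  | succ n hn ih =>
    have hd : (d : ℚ) ≠ 0 := Nat.cast_ne_zero.mpr (by omega)
    obtain ⟨k, rfl⟩ : ∃ k, n = k + 1 := ⟨n - 1, by omega⟩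
    rw [succ_eq_mul hrec hn (by omega), ih (by omega), Nat.add_sub_cancel, Nat.add_sub_cancel]
    field_simp
    ring

theorem strictMonoOn_Icc (h0 : 0 < p 0) : StrictMonoOn p (Set.Icc 1 d) := by
  refine strictMonoOn_of_lt_succ Set.ordConnected_Icc fun n _ hn hsucc => ?_
  simp only [Order.succ_eq_add_one, Set.mem_Icc] at hn hsucc ⊢
  have hd : (1 : ℚ) < d := by exact_mod_cast (show 1 < d by omega)
  have hpos : 0 < p n := by rw [eq_pow_div_pow hrec hn.1 hn.2]; positivity
  rw [succ_eq_mul hrec hn.1 (by omega)]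
  exact lt_mul_of_one_lt_left hpos ((one_lt_div (by positivity)).mpr (by linarith))

end DieRecurrence

/-- For the die-roll hitting probabilities, `p n = 7^(n-1)/6^n` for `1 ≤ n ≤ 6`;
in particular `p` is strictly increasing on `{1,...,6}`. -/
theorem stmt1 (p : ℕ → ℚ)
    (h0 : p 0 = 1)
    (hrec : ∀ n : ℕ, 1 ≤ n →
      p n = (1/6) * ∑ i ∈ Finset.Icc 1 (min n 6), p (n - i)) :
    (∀ n : ℕ, 1 ≤ n → n ≤ 6 → p n = (7:ℚ)^(n-1) / 6^n) ∧
    (∀ m n : ℕ, 1 ≤ m → m < n → n ≤ 6 → p m < p n) := by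
  have hrec6 : ∀ n : ℕ, 1 ≤ n → p n = (1 / (6 : ℕ)) * ∑ i ∈ Icc 1 (min n 6), p (n - i) := by
    simpa only [Nat.cast_ofNat] using hrec
  refine ⟨fun n hn hn6 => ?_, fun m n hm hmn hn6 => ?_⟩
  · rw [DieRecurrence.eq_pow_div_pow hrec6 hn hn6, h0]
    norm_num
  · exact DieRecurrence.strictMonoOn_Icc hrec6 (by rw [h0]; norm_num)
      ⟨hm, by omega⟩ ⟨by omega, hn6⟩ hmn
end

section
/- The sequence p_n defined by the six-term averaging recurrence converges to 2/7 as n → ∞. -/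
/-!
The weighted window sum `∑ i < k, (i + 1) * p (n + i)` of a sequence in which every term is the
mean of the `k` preceding ones does not depend on `n`; this determines the only possible limit.
After subtracting it, every window contains a nonpositive and a nonnegative term, so if a window
lies in `[-e, e]`, each of the next `k` terms is an average in which one summand is already `1/k`
of the way from `e` towards `0`, and the following window lies in
`[-(1 - k⁻ᵏ) e, (1 - k⁻ᵏ) e]`.
The sequence `p` of the theorem becomes such a sequence (`k = 6`) once five zeros are prepended,
and its weighted sum is then `6 * p 0 = 21 * (2/7)`.
-/

open Filter Topology Finset

def IsRunningMean (k : ℕ) (r : ℕ → ℝ) : Prop :=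
  ∀ n, r (n + k) = (∑ i ∈ range k, r (n + i)) / k

def weightedSum (k : ℕ) (r : ℕ → ℝ) (n : ℕ) : ℝ :=
  ∑ i ∈ range k, ((i : ℝ) + 1) * r (n + i)

lemma sum_range_cast_add_one (k : ℕ) : ∑ i ∈ range k, ((i : ℝ) + 1) = k * (k + 1) / 2 := by
  induction k with
  | zero => simp
  | succ k ih => rw [sum_range_succ, ih]; push_cast; ring

lemma Finset.sum_le_card_mul_sub {ι : Type*} {s : Finset ι} {f : ι → ℝ} {e δ : ℝ} {j : ι}
    (hf : ∀ i ∈ s, f i ≤ e) (hj : j ∈ s) (hfj : f j ≤ e - δ) :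
    ∑ i ∈ s, f i ≤ #s * e - δ := by
  have h := single_le_sum (f := fun i => e - f i) (fun i hi => sub_nonneg.2 (hf i hi)) hj
  rw [sum_sub_distrib, sum_const, nsmul_eq_mul] at h
  linarith

namespace IsRunningMean

variable {k : ℕ} {r : ℕ → ℝ}

lemma neg (hr : IsRunningMean k r) : IsRunningMean k (-r) := fun n => by
  simp only [Pi.neg_apply, sum_neg_distrib, hr n, neg_div]

lemma sub_const (hr : IsRunningMean k r) (hk : k ≠ 0) (c : ℝ) :
    IsRunningMean k (fun n => r n - c) := fun n => by
  dsimp only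
  rw [hr n, sum_sub_distrib, sum_const, card_range, nsmul_eq_mul]
  field_simp

lemma weightedSum_succ (hr : IsRunningMean k r) (n : ℕ) :
    weightedSum k r (n + 1) = weightedSum k r n := by
  obtain _ | k := k
  · simp [weightedSum]
  -- Shifting lowers every weight by one; the new top term, of weight `k + 1`, restores the old sum.
  have hlast : ((k : ℝ) + 1) * r (n + (k + 1)) = ∑ i ∈ range (k + 1), r (n + i) := by
    rw [hr n]; push_cast; field_simp
  simp only [weightedSum]
  rw [sum_range_succ, show n + 1 + k = n + (k + 1) by ring, hlast,
    sum_range_succ' (fun i => r (n + i)), sum_range_succ' (fun i => ((i : ℝ) + 1) * r (n + i)),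
    ← add_assoc, ← sum_add_distrib]
  push_cast
  simp only [zero_add, one_mul]
  congr 1
  exact sum_congr rfl fun i _ => by ring_nf

lemma weightedSum_eq (hr : IsRunningMean k r) (n : ℕ) :
    weightedSum k r n = weightedSum k r 0 := by
  induction n with
  | zero => rfl
  | succ n ih => rw [hr.weightedSum_succ, ih]

lemma le_sub_div (hr : IsRunningMean k r) {n j : ℕ} {e δ : ℝ}
    (hle : ∀ i < k, r (n + i) ≤ e) (hj : j < k) (hrj : r (n + j) ≤ e - δ) :
    r (n + k) ≤ e - δ / k := by
  have hk : (0 : ℝ) < k := by exact_mod_cast Nat.zero_lt_of_lt hj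
  have hsum := Finset.sum_le_card_mul_sub (s := range k) (f := fun i => r (n + i))
    (fun i hi => hle i (mem_range.1 hi)) (mem_range.2 hj) hrj
  rw [card_range] at hsum
  rw [hr n, div_le_iff₀ hk]
  rw [sub_mul, div_mul_cancel₀ _ hk.ne']
  linarith

lemma le_of_window_le (hr : IsRunningMean k r) (hk : 0 < k) {n : ℕ} {e : ℝ}
    (hle : ∀ i < k, r (n + i) ≤ e) {m : ℕ} (hm : n ≤ m) : r m ≤ e := by
  have hwin : ∀ j, ∀ i < k, r (n + j + i) ≤ e := by
    intro j
    induction j with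
    | zero => simpa using hle
    | succ j ih =>
      intro i hi
      rcases lt_or_eq_of_le (Nat.succ_le_of_lt hi) with hi' | hi'
      · simpa [add_assoc, add_comm 1 i] using ih (i + 1) hi'
      · have := hr.le_sub_div (δ := 0) ih hk (by simpa using ih 0 hk)
        rw [← hi'] at this
        simpa [add_assoc, add_comm 1 i] using this
  obtain ⟨j, rfl⟩ := Nat.exists_eq_add_of_le hm
  simpa using hwin j 0 hk

lemma le_sub_div_pow (hr : IsRunningMean k r) {n j : ℕ} {e δ : ℝ}
    (hle : ∀ i < k, r (n + i) ≤ e) (hj : j < k) (hrj : r (n + j) ≤ e - δ) (m : ℕ) :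
    r (n + k + m) ≤ e - δ / k ^ (m + 1) := by
  induction m with
  | zero => simpa using hr.le_sub_div hle hj hrj
  | succ m ih =>
    have hk : 0 < k := Nat.zero_lt_of_lt hj
    have hle' : ∀ i < k, r (n + (m + 1) + i) ≤ e := fun i _ =>
      hr.le_of_window_le hk hle (by omega)
    have hlast : r (n + (m + 1) + (k - 1)) ≤ e - δ / k ^ (m + 1) := by
      convert ih using 2; omega
    convert hr.le_sub_div hle' (Nat.sub_one_lt hk.ne') hlast using 2
    · ring_nf
    · rw [pow_succ, div_div]

lemma exists_le_zero_of_weightedSum_eq_zero (hk : 0 < k) {n : ℕ} (hW : weightedSum k r n = 0) :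
    ∃ i < k, r (n + i) ≤ 0 := by
  by_contra! hpos
  have : 0 < weightedSum k r n :=
    sum_pos (fun i hi => mul_pos (by positivity) (hpos i (mem_range.1 hi)))
      (nonempty_range_iff.2 hk.ne')
  linarith

lemma window_le_mul (hr : IsRunningMean k r) (hk : 0 < k) {n : ℕ} {e : ℝ} (he : 0 ≤ e)
    (hW : weightedSum k r n = 0) (hle : ∀ i < k, r (n + i) ≤ e) :
    ∀ i < k, r (n + k + i) ≤ (1 - 1 / (k : ℝ) ^ k) * e := by
  intro i hi
  obtain ⟨j, hj, hrj⟩ := exists_le_zero_of_weightedSum_eq_zero hk hW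
  have hdecay := hr.le_sub_div_pow (δ := e) hle hj (by simpa using hrj) i
  have hpow : (k : ℝ) ^ (i + 1) ≤ (k : ℝ) ^ k :=
    pow_le_pow_right₀ (by exact_mod_cast hk) hi
  have : e / (k : ℝ) ^ k ≤ e / (k : ℝ) ^ (i + 1) :=
    div_le_div_of_nonneg_left he (by positivity) hpow
  rw [sub_mul, one_mul, one_div_mul_eq_div]
  linarith

lemma abs_window_le_mul (hr : IsRunningMean k r) (hk : 0 < k) {n : ℕ} {e : ℝ}
    (hW : weightedSum k r n = 0) (hle : ∀ i < k, |r (n + i)| ≤ e) :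
    ∀ i < k, |r (n + k + i)| ≤ (1 - 1 / (k : ℝ) ^ k) * e := by
  have he : 0 ≤ e := (abs_nonneg _).trans (hle 0 hk)
  have hWneg : weightedSum k (-r) n = 0 := by
    simpa [weightedSum, sum_neg_distrib] using hW
  intro i hi
  rw [abs_le]
  constructor
  · have := hr.neg.window_le_mul hk he hWneg (fun i hi => neg_le.1 (abs_le.1 (hle i hi)).1) i hi
    simp only [Pi.neg_apply] at this
    linarith
  · exact hr.window_le_mul hk he hW (fun i hi => (abs_le.1 (hle i hi)).2) i hi

lemma tendsto_zero (hr : IsRunningMean k r) (hk : 0 < k) (hW : weightedSum k r 0 = 0) :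
    Tendsto r atTop (𝓝 0) := by
  set c : ℝ := 1 - 1 / (k : ℝ) ^ k
  set e := ∑ i ∈ range k, |r i|
  have hc0 : 0 ≤ c := by
    have : 1 ≤ (k : ℝ) ^ k := one_le_pow₀ (by exact_mod_cast hk)
    simp only [c, sub_nonneg]
    exact div_le_one_of_le₀ this (by positivity)
  have hc1 : c < 1 := by
    have : (0 : ℝ) < k := by exact_mod_cast hk
    simp only [c]
    linarith [show 0 < 1 / (k : ℝ) ^ k by positivity]
  have hwin : ∀ j, ∀ i < k, |r (k * j + i)| ≤ c ^ j * e := by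
    intro j
    induction j with
    | zero =>
      intro i hi
      simpa using single_le_sum (f := fun i => |r i|) (fun i _ => abs_nonneg _) (mem_range.2 hi)
    | succ j ih =>
      intro i hi
      have := hr.abs_window_le_mul hk ((hr.weightedSum_eq _).trans hW) ih i hi
      rwa [show k * (j + 1) + i = k * j + k + i by ring, pow_succ, mul_comm _ c, mul_assoc]
  have hbound : ∀ m, |r m| ≤ c ^ (m / k) * e := fun m => by
    simpa [Nat.div_add_mod] using hwin (m / k) (m % k) (Nat.mod_lt m hk)
  have hdiv : Tendsto (fun m : ℕ => m / k) atTop atTop :=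
    Nat.tendsto_div_const_atTop hk.ne'
  have hgeo : Tendsto (fun m : ℕ => c ^ (m / k) * e) atTop (𝓝 0) := by
    simpa using ((tendsto_pow_atTop_nhds_zero_of_lt_one hc0 hc1).comp hdiv).mul_const e
  exact squeeze_zero_norm hbound hgeo

lemma tendsto (hr : IsRunningMean k r) (hk : 0 < k) :
    Tendsto r atTop (𝓝 (weightedSum k r 0 / (k * (k + 1) / 2))) := by
  set L := weightedSum k r 0 / (k * (k + 1) / 2)
  have hk' : (k : ℝ) ≠ 0 := by exact_mod_cast hk.ne'
  have hW : weightedSum k (fun n => r n - L) 0 = 0 := by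
    simp only [weightedSum, mul_sub, sum_sub_distrib, ← sum_mul, sum_range_cast_add_one, L]
    field_simp
    ring
  simpa using (hr.sub_const hk.ne' L).tendsto_zero hk hW |>.add_const L

end IsRunningMean

def prependZeros (j : ℕ) (p : ℕ → ℝ) (m : ℕ) : ℝ := if j ≤ m then p (m - j) else 0

@[simp]
lemma prependZeros_add (j : ℕ) (p : ℕ → ℝ) (n : ℕ) : prependZeros j p (n + j) = p n := by
  simp [prependZeros]

lemma isRunningMean_prependZeros {k : ℕ} {p : ℕ → ℝ} (hk : 0 < k)
    (hrec : ∀ n : ℕ, 1 ≤ n → p n = (1 / k) * ∑ i ∈ Icc 1 (min n k), p (n - i)) :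
    IsRunningMean k (prependZeros (k - 1) p) := fun n => by
  have hsum : ∑ i ∈ range k, prependZeros (k - 1) p (n + i) =
      ∑ i ∈ Icc 1 (min (n + 1) k), p (n + 1 - i) := by
    simp only [prependZeros]
    rw [← sum_filter]
    refine sum_nbij' (fun i => k - i) (fun i => k - i) ?_ ?_ ?_ ?_ ?_ <;> intro i hi <;>
      simp only [mem_filter, mem_range, mem_Icc, le_inf_iff] at hi ⊢
    all_goals first | omega | (congr 1; omega)
  rw [hsum, show n + k = n + 1 + (k - 1) by omega, prependZeros_add, hrec (n + 1) (by omega),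
    one_div_mul_eq_div]

lemma weightedSum_prependZeros {k : ℕ} (hk : 0 < k) (p : ℕ → ℝ) :
    weightedSum k (prependZeros (k - 1) p) 0 = k * p 0 := by
  obtain ⟨k, rfl⟩ := Nat.exists_eq_add_of_lt hk
  simp only [weightedSum, zero_add, Nat.add_sub_cancel]
  rw [sum_range_succ, sum_eq_zero fun i hi => by simp [prependZeros, (mem_range.1 hi).not_ge]]
  simp [prependZeros]

theorem tendsto_two_mul_div_of_eq_mean_Icc {k : ℕ} {p : ℕ → ℝ} (hk : 0 < k)
    (hrec : ∀ n : ℕ, 1 ≤ n → p n = (1 / k) * ∑ i ∈ Icc 1 (min n k), p (n - i)) :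
    Tendsto p atTop (𝓝 (2 * p 0 / (k + 1))) := by
  have h := (isRunningMean_prependZeros hk hrec).tendsto hk
  rw [weightedSum_prependZeros hk, ← tendsto_add_atTop_iff_nat (k - 1)] at h
  simp only [prependZeros_add] at h
  convert h using 2
  have : (k : ℝ) ≠ 0 := by exact_mod_cast hk.ne'
  field_simp

/-- The sequence defined by the six-term averaging recurrence converges to `2/7`. -/
theorem stmt2 (p : ℕ → ℝ)
    (h0 : p 0 = 1)
    (hrec : ∀ n : ℕ, 1 ≤ n →
      p n = (1/6) * ∑ i ∈ Finset.Icc 1 (min n 6), p (n - i)) :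
    Tendsto p atTop (𝓝 (2/7)) := by
  have h := tendsto_two_mul_div_of_eq_mean_Icc (k := 6) (by norm_num) (by simpa using hrec)
  norm_num [h0] at h
  exact h
end
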